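/- arXiv:2302.00839 — 4 statements merged into one kernel-verified Lean document; each statement's English description precedes it below -/
import Mathlib

section
/- Let Z_1,...,Z_{N+1} be exchangeable real-valued random variables and let ε ∈ (0,1). Then the probability that Z_{N+1} is at most the (1-ε)-empirical quantile of the multiset {Z_1,...,Z_N} ∪ {+∞} is at least 1-ε, where the β-quantile of a finite multiset of values is the infimum of all t such that the fraction of values ≤ t is at least β. -/
open MeasureTheory
open scoped ENNReal Classical

namespace ConformalAux

variable {n : ℕ}

/-- strict rank of the `m`-th entry of `z`. -/
noncomputable def rank (z : Fin n → ℝ) (m : Fin n) : ℕ :=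
  (Finset.univ.filter fun j => z j < z m).card

lemma card_filter_comp (π : Equiv.Perm (Fin n)) (q : Fin n → Prop) :
    (Finset.univ.filter fun j => q (π j)).card = (Finset.univ.filter q).card := by
  classical
  conv_rhs => rw [← Finset.map_univ_equiv π, Finset.filter_map, Finset.card_map]
  rfl

lemma rank_comp (z : Fin n → ℝ) (π : Equiv.Perm (Fin n)) (m : Fin n) :
    rank (fun i => z (π i)) m = rank z (π m) :=
  card_filter_comp π (fun i => z i < z (π m))

lemma rank_sort (z : Fin n → ℝ) (j : Fin n) :
    rank z (Tuple.sort z j) ≤ (j : ℕ) := by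
  classical
  have hm := Tuple.monotone_sort z
  have h1 : rank z (Tuple.sort z j)
      = (Finset.univ.filter fun i => z (Tuple.sort z i) < z (Tuple.sort z j)).card := by
    rw [rank, ← card_filter_comp (Tuple.sort z) (fun i => z i < z (Tuple.sort z j))]
  rw [h1]
  have h2 : (Finset.univ.filter fun i => z (Tuple.sort z i) < z (Tuple.sort z j))
      ⊆ Finset.univ.filter fun i => i < j := by
    intro i hi
    simp only [Finset.mem_filter, Finset.mem_univ, true_and] at hi ⊢
    by_contra hij
    exact absurd (hm (not_lt.1 hij)) (not_le.2 hi)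
  calc _ ≤ (Finset.univ.filter fun i => i < j).card := Finset.card_le_card h2
    _ = (Finset.Iio j).card := by rw [Finset.filter_gt_eq_Iio]
    _ = (j : ℕ) := Fin.card_Iio j

lemma count_rank_lt (z : Fin n → ℝ) (k : ℕ) (hk : k ≤ n) :
    k ≤ (Finset.univ.filter fun m => rank z m < k).card := by
  classical
  rcases Nat.eq_zero_or_pos k with hk0 | hk0
  · simp [hk0]
  have hsub : (Finset.univ : Finset (Fin k)).map
      ((Fin.castLEEmb hk).trans (Tuple.sort z).toEmbedding)
      ⊆ Finset.univ.filter fun m => rank z m < k := by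
    intro m hm
    simp only [Finset.mem_map, Finset.mem_univ, true_and] at hm
    obtain ⟨j, hj⟩ := hm
    simp only [Finset.mem_filter, Finset.mem_univ, true_and]
    have : rank z (Tuple.sort z (Fin.castLE hk j)) ≤ ((Fin.castLE hk j : Fin n) : ℕ) :=
      rank_sort z _
    rw [← hj]
    calc rank z (((Fin.castLEEmb hk).trans (Tuple.sort z).toEmbedding) j)
        ≤ ((Fin.castLE hk j : Fin n) : ℕ) := this
      _ = (j : ℕ) := rfl
      _ < k := j.isLt
  calc k = ((Finset.univ : Finset (Fin k)).map
        ((Fin.castLEEmb hk).trans (Tuple.sort z).toEmbedding)).card := by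
        simp
    _ ≤ _ := Finset.card_le_card hsub

lemma rank_last {N : ℕ} (z : Fin (N + 1) → ℝ) :
    rank z (Fin.last N)
      = (Finset.univ.filter fun i : Fin N => z i.castSucc < z (Fin.last N)).card := by
  rw [rank, Finset.card_filter, Finset.card_filter, Fin.sum_univ_castSucc]
  simp

lemma quantile_iff {N : ℕ} (c : ℝ) (hc : 0 < c) (z : Fin (N + 1) → ℝ) :
    ((z (Fin.last N) : EReal) ≤
        sInf {t : EReal |
          c ≤ (Nat.card {i : Fin N // (z i.castSucc : EReal) ≤ t} : ℝ) +
            (if (⊤ : EReal) ≤ t then 1 else 0)})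
      ↔ ((rank z (Fin.last N) : ℝ) < c) := by
  classical
  have hcard : ∀ t : EReal, (Nat.card {i : Fin N // (z i.castSucc : EReal) ≤ t} : ℕ)
      = (Finset.univ.filter fun i : Fin N => (z i.castSucc : EReal) ≤ t).card := by
    intro t
    rw [Nat.card_eq_fintype_card, Fintype.card_subtype]
  rw [rank_last]
  set S' : Finset (Fin N) :=
    Finset.univ.filter fun i : Fin N => z i.castSucc < z (Fin.last N) with hS'
  constructor
  · intro hle
    by_contra hcle
    push_neg at hcle
    have hne : S'.Nonempty := by
      rw [← Finset.card_pos]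
      by_contra h
      push_neg at h
      have h0 : S'.card = 0 := Nat.le_zero.1 h
      rw [h0] at hcle
      norm_num at hcle
      linarith
    obtain ⟨i₀, hi₀, hmax⟩ := Finset.exists_max_image S' (fun i => z i.castSucc) hne
    have hi₀lt : z i₀.castSucc < z (Fin.last N) := by
      have := hi₀; rw [hS'] at this
      simpa using this
    set t : EReal := ((z i₀.castSucc : ℝ) : EReal) with ht
    have htmem : t ∈ {t : EReal |
        c ≤ (Nat.card {i : Fin N // (z i.castSucc : EReal) ≤ t} : ℝ) +
          (if (⊤ : EReal) ≤ t then 1 else 0)} := by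
      have hite : ¬ ((⊤ : EReal) ≤ t) := by
        rw [ht]; exact fun h => EReal.coe_ne_top _ (top_le_iff.1 h)
      have hsub : S' ⊆ Finset.univ.filter fun i : Fin N => (z i.castSucc : EReal) ≤ t := by
        intro i hi
        simp only [Finset.mem_filter, Finset.mem_univ, true_and]
        rw [ht, EReal.coe_le_coe_iff]
        exact hmax i hi
      have hcc : (S'.card : ℝ)
          ≤ ((Finset.univ.filter fun i : Fin N => (z i.castSucc : EReal) ≤ t).card : ℝ) := by
        exact_mod_cast Finset.card_le_card hsub
      rw [Set.mem_setOf_eq, if_neg hite, add_zero, hcard t]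
      linarith
    have h1 : sInf {t : EReal |
        c ≤ (Nat.card {i : Fin N // (z i.castSucc : EReal) ≤ t} : ℝ) +
          (if (⊤ : EReal) ≤ t then 1 else 0)} ≤ t := sInf_le htmem
    have h2 : (z (Fin.last N) : EReal) ≤ t := hle.trans h1
    rw [ht, EReal.coe_le_coe_iff] at h2
    linarith
  · intro hlt
    apply le_sInf
    intro t ht
    by_contra h
    push_neg at h
    have hite : ¬ ((⊤ : EReal) ≤ t) := fun htop => absurd (htop.trans_lt h) not_top_lt
    have hsub : (Finset.univ.filter fun i : Fin N => (z i.castSucc : EReal) ≤ t) ⊆ S' := by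
      intro i hi
      simp only [Finset.mem_filter, Finset.mem_univ, true_and, hS'] at hi ⊢
      have : (z i.castSucc : EReal) < (z (Fin.last N) : EReal) := lt_of_le_of_lt hi h
      exact_mod_cast this
    have hcc : ((Finset.univ.filter fun i : Fin N => (z i.castSucc : EReal) ≤ t).card : ℝ)
        ≤ (S'.card : ℝ) := by exact_mod_cast Finset.card_le_card hsub
    rw [Set.mem_setOf_eq, if_neg hite, add_zero, hcard t] at ht
    linarith

end ConformalAux

/-- Split conformal prediction guarantee: for exchangeable real-valued random
variables `Z 0, ..., Z N`, the probability that the last one is at most the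
`(1-ε)`-empirical quantile of the first `N` values together with `+∞` is at
least `1-ε`.  The quantile is computed in `EReal` so that the extra `+∞`
element is handled faithfully. -/
theorem stmt_0 {Ω : Type*} [MeasurableSpace Ω] (μ : Measure Ω) [IsProbabilityMeasure μ]
    (N : ℕ) (Z : Fin (N + 1) → Ω → ℝ) (hZmeas : ∀ i, Measurable (Z i))
    (hexch : ∀ π : Equiv.Perm (Fin (N + 1)),
      Measure.map (fun ω i => Z (π i) ω) μ = Measure.map (fun ω i => Z i ω) μ)
    (ε : ℝ) (hε : ε ∈ Set.Ioo (0 : ℝ) 1) :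
    ENNReal.ofReal (1 - ε) ≤
      μ {ω | (Z (Fin.last N) ω : EReal) ≤
        sInf {t : EReal |
          (1 - ε) * (N + 1) ≤
            (Nat.card {i : Fin N // (Z i.castSucc ω : EReal) ≤ t} : ℝ) +
              (if (⊤ : EReal) ≤ t then 1 else 0)}} := by
  classical
  obtain ⟨hε0, hε1⟩ := hε
  set c : ℝ := (1 - ε) * (N + 1) with hc_def
  have hc0 : 0 < c := by
    apply mul_pos <;> [linarith; positivity]
  have hcN : c ≤ (N : ℝ) + 1 := by nlinarith [Nat.cast_nonneg (α := ℝ) N]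
  set k : ℕ := ⌈c⌉₊ with hk_def
  have hkN : k ≤ N + 1 := Nat.ceil_le.2 (by push_cast; linarith)
  set T : Ω → (Fin (N + 1) → ℝ) := fun ω i => Z i ω with hT_def
  have hT : Measurable T := measurable_pi_lambda _ hZmeas
  set ν : Measure (Fin (N + 1) → ℝ) := Measure.map T μ with hν_def
  have hνprob : IsProbabilityMeasure ν := Measure.isProbabilityMeasure_map hT.aemeasurable
  set E : Fin (N + 1) → Set (Fin (N + 1) → ℝ) :=
    fun m => {z | (ConformalAux.rank z m : ℝ) < c} with hE_def
  have hrank_cast : ∀ (z : Fin (N + 1) → ℝ) (m : Fin (N + 1)),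
      (ConformalAux.rank z m : ℝ) = ∑ j : Fin (N + 1), if z j < z m then (1 : ℝ) else 0 := by
    intro z m
    rw [ConformalAux.rank, Finset.card_filter]
    push_cast
    rfl
  have hEmeas : ∀ m, MeasurableSet (E m) := by
    intro m
    have hg : Measurable (fun z : Fin (N + 1) → ℝ =>
        ∑ j : Fin (N + 1), if z j < z m then (1 : ℝ) else 0) := by
      apply Finset.measurable_sum
      intro j _
      exact Measurable.ite
        (measurableSet_lt (measurable_pi_apply j) (measurable_pi_apply m))
        measurable_const measurable_const
    have : E m = (fun z : Fin (N + 1) → ℝ =>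
        ∑ j : Fin (N + 1), if z j < z m then (1 : ℝ) else 0) ⁻¹' Set.Iio c := by
      ext z
      simp only [hE_def, Set.mem_setOf_eq, Set.mem_preimage, Set.mem_Iio, hrank_cast z m]
    rw [this]
    exact hg measurableSet_Iio
  -- permutation invariance of ν
  have hperm : ∀ π : Equiv.Perm (Fin (N + 1)),
      Measure.map (fun z : Fin (N + 1) → ℝ => fun i => z (π i)) ν = ν := by
    intro π
    have hp : Measurable (fun z : Fin (N + 1) → ℝ => fun i => z (π i)) :=
      measurable_pi_lambda _ fun i => measurable_pi_apply (π i)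
    rw [hν_def, Measure.map_map hp hT]
    exact hexch π
  have hEeq : ∀ m, ν (E m) = ν (E (Fin.last N)) := by
    intro m
    set π := Equiv.swap (Fin.last N) m with hπ
    have hp : Measurable (fun z : Fin (N + 1) → ℝ => fun i => z (π i)) :=
      measurable_pi_lambda _ fun i => measurable_pi_apply (π i)
    have hpre : E m = (fun z : Fin (N + 1) → ℝ => fun i => z (π i)) ⁻¹' E (Fin.last N) := by
      ext z
      simp only [Set.mem_preimage, hE_def, Set.mem_setOf_eq]
      have hr : ConformalAux.rank (fun i => z (π i)) (Fin.last N) = ConformalAux.rank z m := by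
        rw [ConformalAux.rank_comp z π (Fin.last N), hπ, Equiv.swap_apply_left]
      rw [hr]
    rw [hpre, ← Measure.map_apply hp (hEmeas _), hperm π]
  -- lower bound on the sum of the measures
  have hsum : (k : ℝ≥0∞) ≤ ∑ m : Fin (N + 1), ν (E m) := by
    have hpoint : ∀ z : Fin (N + 1) → ℝ,
        (k : ℝ≥0∞) ≤ ∑ m : Fin (N + 1), (E m).indicator 1 z := by
      intro z
      have h1 : ∑ m : Fin (N + 1), (E m).indicator (1 : (Fin (N + 1) → ℝ) → ℝ≥0∞) z
          = ((Finset.univ.filter fun m => z ∈ E m).card : ℝ≥0∞) := by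
        rw [Finset.card_filter]
        push_cast
        refine Finset.sum_congr rfl fun m _ => ?_
        simp [Set.indicator_apply]
      rw [h1]
      have h2 : (Finset.univ.filter fun m => z ∈ E m)
          = Finset.univ.filter fun m => ConformalAux.rank z m < k := by
        refine Finset.filter_congr fun m _ => ?_
        simp only [hE_def, Set.mem_setOf_eq, hk_def, Nat.lt_ceil]
      rw [h2]
      exact_mod_cast Nat.cast_le.2 (ConformalAux.count_rank_lt z k hkN)
    calc (k : ℝ≥0∞) = ∫⁻ _, (k : ℝ≥0∞) ∂ν := by simp
      _ ≤ ∫⁻ z, ∑ m : Fin (N + 1), (E m).indicator 1 z ∂ν := lintegral_mono hpoint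
      _ = ∑ m : Fin (N + 1), ∫⁻ z, (E m).indicator 1 z ∂ν :=
          lintegral_finset_sum _ fun m _ => measurable_one.indicator (hEmeas m)
      _ = ∑ m : Fin (N + 1), ν (E m) := by
          refine Finset.sum_congr rfl fun m _ => ?_
          exact lintegral_indicator_one (hEmeas m)
  have hconst : ∑ m : Fin (N + 1), ν (E m) = ((N : ℝ≥0∞) + 1) * ν (E (Fin.last N)) := by
    calc ∑ m : Fin (N + 1), ν (E m) = ∑ _m : Fin (N + 1), ν (E (Fin.last N)) :=
          Finset.sum_congr rfl fun m _ => hEeq m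
      _ = (N + 1) • ν (E (Fin.last N)) := by simp
      _ = ((N : ℝ≥0∞) + 1) * ν (E (Fin.last N)) := by
          rw [nsmul_eq_mul]; push_cast; ring
  have hmain : ENNReal.ofReal (1 - ε) ≤ ν (E (Fin.last N)) := by
    have hNtop : ((N : ℝ≥0∞) + 1) ≠ ⊤ := by simp
    have hN0 : ((N : ℝ≥0∞) + 1) ≠ 0 := by simp
    rw [← ENNReal.mul_le_mul_iff_right hN0 hNtop, ← hconst]
    calc ((N : ℝ≥0∞) + 1) * ENNReal.ofReal (1 - ε) = ENNReal.ofReal c := by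
          rw [hc_def, mul_comm, ENNReal.ofReal_mul (by linarith)]
          congr 1
          rw [show ((N : ℝ) + 1) = ((N + 1 : ℕ) : ℝ) by push_cast; ring,
            ENNReal.ofReal_natCast]
          push_cast; ring
      _ ≤ (k : ℝ≥0∞) := by
          rw [← ENNReal.ofReal_natCast k]
          exact ENNReal.ofReal_le_ofReal (Nat.le_ceil c)
      _ ≤ ∑ m : Fin (N + 1), ν (E m) := hsum
  have hset : {ω | (Z (Fin.last N) ω : EReal) ≤
      sInf {t : EReal |
        (1 - ε) * (N + 1) ≤
          (Nat.card {i : Fin N // (Z i.castSucc ω : EReal) ≤ t} : ℝ) +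
            (if (⊤ : EReal) ≤ t then 1 else 0)}} = T ⁻¹' E (Fin.last N) := by
    ext ω
    simp only [Set.mem_setOf_eq, Set.mem_preimage, hE_def]
    exact ConformalAux.quantile_iff c hc0 (T ω)
  calc ENNReal.ofReal (1 - ε) ≤ ν (E (Fin.last N)) := hmain
    _ = μ (T ⁻¹' E (Fin.last N)) := Measure.map_apply hT (hEmeas _)
    _ = _ := by rw [hset]
end

section
/- If Z_1,...,Z_{N+1} are exchangeable real-valued random variables, then for each i the rank of Z_i among Z_1,...,Z_{N+1} is 'uniform' in the sense that P(Z_{N+1} is among the ⌈(1-ε)(N+1)⌉ smallest values of Z_1,...,Z_{N+1}) ≥ 1-ε, assuming ties are broken so that ranks are well-defined (e.g., the Z_i are almost surely distinct). -/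
open MeasureTheory
open scoped ENNReal Classical



noncomputable def rk {N : ℕ} (v : Fin (N + 1) → ℝ) (j : Fin (N + 1)) : ℕ :=
  (Finset.univ.filter (fun i => v i ≤ v j)).card

lemma rk_injective {N : ℕ} {v : Fin (N + 1) → ℝ} (hv : Function.Injective v) :
    Function.Injective (rk v) := by
  have mono : ∀ a b, v a < v b → rk v a < rk v b := by
    intro a b hab
    apply Finset.card_lt_card
    constructor
    · intro i hi
      simp only [Finset.mem_filter, Finset.mem_univ, true_and] at hi ⊢
      exact hi.trans hab.le
    · intro hsub
      have : b ∈ Finset.univ.filter (fun i => v i ≤ v b) := by simp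
      have := hsub this
      simp only [Finset.mem_filter, Finset.mem_univ, true_and] at this
      exact absurd this (not_le.mpr hab)
  intro a b hab
  by_contra hne
  rcases lt_or_gt_of_ne (fun h : v a = v b => hne (hv h)) with h | h
  · exact absurd hab (Nat.ne_of_lt (mono a b h))
  · exact absurd hab.symm (Nat.ne_of_lt (mono b a h))

lemma rk_mem_Icc {N : ℕ} (v : Fin (N + 1) → ℝ) (j : Fin (N + 1)) :
    rk v j ∈ Finset.Icc 1 (N + 1) := by
  simp only [Finset.mem_Icc]
  constructor
  · have : j ∈ Finset.univ.filter (fun i => v i ≤ v j) := by simp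
    exact Finset.card_pos.mpr ⟨j, this⟩
  · calc rk v j ≤ (Finset.univ : Finset (Fin (N+1))).card := Finset.card_filter_le _ _
    _ = N + 1 := by simp

lemma count_rank_le {N k : ℕ} (hk : k ≤ N + 1) {v : Fin (N + 1) → ℝ}
    (hv : Function.Injective v) :
    k ≤ (Finset.univ.filter (fun j => rk v j ≤ k)).card := by
  have hinj := rk_injective hv
  have himg : Finset.univ.image (rk v) = Finset.Icc 1 (N + 1) := by
    apply Finset.eq_of_subset_of_card_le
    · intro m hm
      simp only [Finset.mem_image] at hm
      obtain ⟨j, _, rfl⟩ := hm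
      exact rk_mem_Icc v j
    · rw [Nat.card_Icc, Finset.card_image_of_injective _ hinj]
      simp
  have h1 : (Finset.univ.filter (fun j => rk v j ≤ k)).card
      = ((Finset.univ.image (rk v)).filter (fun m => m ≤ k)).card := by
    rw [Finset.filter_image, Finset.card_image_of_injective _ hinj]
  rw [h1, himg]
  have h2 : (Finset.Icc 1 (N + 1)).filter (fun m => m ≤ k) = Finset.Icc 1 k := by
    ext m
    simp only [Finset.mem_filter, Finset.mem_Icc]
    omega
  rw [h2, Nat.card_Icc]
  omega

lemma card_filter_comp_perm {α : Type*} [Fintype α] (π : Equiv.Perm α) (p : α → Prop)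
    [DecidablePred p] :
    (Finset.univ.filter (fun i => p (π i))).card = (Finset.univ.filter p).card := by
  apply Finset.card_bij (fun i _ => π i)
  · intro i hi; simp only [Finset.mem_filter, Finset.mem_univ, true_and] at hi ⊢; exact hi
  · intro a _ b _ h; exact π.injective h
  · intro b hb
    simp only [Finset.mem_filter, Finset.mem_univ, true_and] at hb
    exact ⟨π.symm b, by simp [hb], by simp⟩

lemma rk_measurable {N : ℕ} (j : Fin (N + 1)) :
    Measurable (fun v : Fin (N + 1) → ℝ => rk v j) := by
  unfold rk
  simp_rw [Finset.card_filter]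
  apply Finset.measurable_sum
  intro i _
  exact Measurable.ite
    (measurableSet_le (measurable_pi_apply i) (measurable_pi_apply j))
    measurable_const measurable_const


/-- Rank uniformity for exchangeable random variables: if `Z 0, ..., Z N` are
exchangeable and almost surely pairwise distinct, then with probability at
least `1-ε` the last variable is among the `⌈(1-ε)(N+1)⌉` smallest values,
i.e. its rank `|{i : Z i ≤ Z last}|` is at most `⌈(1-ε)(N+1)⌉`. -/
theorem stmt_1 {Ω : Type*} [MeasurableSpace Ω] (μ : Measure Ω) [IsProbabilityMeasure μ]
    (N : ℕ) (Z : Fin (N + 1) → Ω → ℝ) (hZmeas : ∀ i, Measurable (Z i))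
    (hexch : ∀ π : Equiv.Perm (Fin (N + 1)),
      Measure.map (fun ω i => Z (π i) ω) μ = Measure.map (fun ω i => Z i ω) μ)
    (hdist : ∀ᵐ ω ∂μ, Function.Injective fun i => Z i ω)
    (ε : ℝ) (hε : ε ∈ Set.Ioo (0 : ℝ) 1) :
    ENNReal.ofReal (1 - ε) ≤
      μ {ω | (Nat.card {i : Fin (N + 1) // Z i ω ≤ Z (Fin.last N) ω} : ℝ) ≤
          (⌈(1 - ε) * (N + 1)⌉₊ : ℝ)} := by
  obtain ⟨hε0, hε1⟩ := hε
  set k := ⌈(1 - ε) * (N + 1)⌉₊ with hkdef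
  have hkN : k ≤ N + 1 := by
    rw [hkdef]
    apply Nat.ceil_le.mpr
    push_cast
    nlinarith
  set A : Fin (N + 1) → Set Ω := fun j => {ω | rk (fun i => Z i ω) j ≤ k} with hA
  have hZvec : Measurable (fun ω i => Z i ω) := measurable_pi_lambda _ hZmeas
  have hAmeas : ∀ j, MeasurableSet (A j) := by
    intro j
    have : A j = (fun ω => (fun i => Z i ω)) ⁻¹' {v | rk v j ≤ k} := rfl
    rw [this]
    exact hZvec ((rk_measurable j) (measurableSet_Iic (a := k)))
  -- all ranks have the same distribution
  have key : ∀ j, μ (A j) = μ (A (Fin.last N)) := by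
    intro j
    set π := Equiv.swap j (Fin.last N) with hπ
    have hπmeas : Measurable (fun ω i => Z (π i) ω) :=
      measurable_pi_lambda _ (fun i => hZmeas _)
    have hS : MeasurableSet {v : Fin (N + 1) → ℝ | rk v (Fin.last N) ≤ k} :=
      (rk_measurable (Fin.last N)) (measurableSet_Iic (a := k))
    have h1 : μ (A (Fin.last N))
        = Measure.map (fun ω i => Z i ω) μ {v | rk v (Fin.last N) ≤ k} := by
      rw [Measure.map_apply hZvec hS]; rfl
    have h2 : μ (A j)
        = Measure.map (fun ω i => Z (π i) ω) μ {v | rk v (Fin.last N) ≤ k} := by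
      rw [Measure.map_apply hπmeas hS]
      congr 1
      ext ω
      simp only [Set.mem_preimage, Set.mem_setOf_eq, hA]
      have heq : rk (fun i => Z (π i) ω) (Fin.last N) = rk (fun i => Z i ω) j := by
        have hπlast : π (Fin.last N) = j := Equiv.swap_apply_right _ _
        unfold rk
        simp only [hπlast]
        exact card_filter_comp_perm π (fun i => Z i ω ≤ Z j ω)
      rw [heq]
    rw [h1, h2, hexch π]
  -- lower bound on the sum of the measures
  have hsum : (k : ℝ≥0∞) ≤ ∑ j, μ (A j) := by
    have hae : ∀ᵐ ω ∂μ, (k : ℝ≥0∞)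
        ≤ ∑ j, Set.indicator (A j) (fun _ => (1 : ℝ≥0∞)) ω := by
      filter_upwards [hdist] with ω hω
      have hcount := count_rank_le hkN hω
      calc (k : ℝ≥0∞)
          ≤ ((Finset.univ.filter (fun j => rk (fun i => Z i ω) j ≤ k)).card : ℝ≥0∞) := by
            exact_mod_cast hcount
        _ = ∑ j, Set.indicator (A j) (fun _ => (1 : ℝ≥0∞)) ω := by
            rw [Finset.card_filter]
            push_cast
            apply Finset.sum_congr rfl
            intro j _
            by_cases h : rk (fun i => Z i ω) j ≤ k <;>
              simp [hA, Set.indicator, h]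
    calc (k : ℝ≥0∞) = ∫⁻ _, (k : ℝ≥0∞) ∂μ := by simp
      _ ≤ ∫⁻ ω, ∑ j, Set.indicator (A j) (fun _ => (1 : ℝ≥0∞)) ω ∂μ :=
          lintegral_mono_ae hae
      _ = ∑ j, ∫⁻ ω, Set.indicator (A j) (fun _ => (1 : ℝ≥0∞)) ω ∂μ :=
          lintegral_finset_sum _ (fun j _ => measurable_const.indicator (hAmeas j))
      _ = ∑ j, μ (A j) := by
          refine Finset.sum_congr rfl (fun j _ => ?_)
          exact lintegral_indicator_one (hAmeas j)
  have hsum' : (k : ℝ≥0∞) ≤ ((N : ℝ≥0∞) + 1) * μ (A (Fin.last N)) := by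
    calc (k : ℝ≥0∞) ≤ ∑ j, μ (A j) := hsum
      _ = ∑ _j : Fin (N + 1), μ (A (Fin.last N)) := Finset.sum_congr rfl (fun j _ => key j)
      _ = ((N : ℝ≥0∞) + 1) * μ (A (Fin.last N)) := by
          rw [Finset.sum_const, Finset.card_univ, Fintype.card_fin, nsmul_eq_mul]
          push_cast
          ring
  -- conclude
  have hgoal : ENNReal.ofReal (1 - ε) ≤ μ (A (Fin.last N)) := by
    have hc0 : ((N : ℝ≥0∞) + 1) ≠ 0 := by simp
    have hctop : ((N : ℝ≥0∞) + 1) ≠ ⊤ := by simp [ENNReal.add_ne_top]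
    rw [← ENNReal.mul_le_mul_iff_right hc0 hctop]
    calc ((N : ℝ≥0∞) + 1) * ENNReal.ofReal (1 - ε)
        = ENNReal.ofReal ((1 - ε) * (N + 1)) := by
          rw [ENNReal.ofReal_mul (by linarith)]
          rw [show ((N : ℝ≥0∞) + 1) = ENNReal.ofReal ((N : ℝ) + 1) by
            rw [ENNReal.ofReal_add (by positivity) zero_le_one]
            simp]
          ring
      _ ≤ ENNReal.ofReal (k : ℝ) := ENNReal.ofReal_le_ofReal (Nat.le_ceil _)
      _ = (k : ℝ≥0∞) := ENNReal.ofReal_natCast k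
      _ ≤ ((N : ℝ≥0∞) + 1) * μ (A (Fin.last N)) := hsum'
  -- identify the goal set with A (Fin.last N)
  have hset : {ω | (Nat.card {i : Fin (N + 1) // Z i ω ≤ Z (Fin.last N) ω} : ℝ) ≤
      (⌈(1 - ε) * (N + 1)⌉₊ : ℝ)} = A (Fin.last N) := by
    ext ω
    simp only [Set.mem_setOf_eq, hA, ← hkdef]
    rw [Nat.card_eq_fintype_card, Fintype.card_subtype]
    exact Nat.cast_le
  rw [hset]
  exact hgoal
end

section
/- Let (X_i, Y_i), i = 1,...,N+1, be i.i.d. pairs where Y_i ∈ {0,1}^K is a multi-hot label vector, and let p_k : X → ℝ be a fixed measurable score for class k. Fix ε ∈ (0,1) and define t_k as the (1-ε)-empirical quantile of {p_k(X_i) : i ≤ N, Y_{i,k} = 0} ∪ {+∞}. Define the prediction set by k ∈ Ŝ_{N+1} iff p_k(X_{N+1}) > t_k. Then P(k ∈ Ŝ_{N+1} and Y_{N+1,k} = 0) ≤ ε · P(Y_{N+1,k} = 0); in particular P(k ∈ Ŝ_{N+1} | Y_{N+1,k} = 0) ≤ ε when P(Y_{N+1,k} = 0) > 0. -/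
open MeasureTheory Finset
open scoped ENNReal Classical

lemma natcard_eq_filter {α : Type*} [Fintype α] (P : α → Prop) [DecidablePred P] :
    (Nat.card {i // P i} : ℕ) = (Finset.univ.filter P).card := by
  rw [Nat.card_eq_fintype_card]; exact Fintype.card_subtype _

lemma natcard_mono {α : Type*} [Fintype α] {P Q : α → Prop} (h : ∀ a, P a → Q a) :
    Nat.card {a // P a} ≤ Nat.card {a // Q a} := by
  rw [natcard_eq_filter, natcard_eq_filter]
  exact Finset.card_le_card (fun a ha => by
    simp only [Finset.mem_filter, Finset.mem_univ, true_and] at *; exact h a ha)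

/-- Quantile characterization. -/
lemma quantile_lt_iff {n : ℕ} (P : Fin n → Prop) (q : Fin n → ℝ) {ε : ℝ}
    (hε0 : 0 < ε) (hε1 : ε < 1) (x : ℝ) :
    sInf {t : EReal |
        (1 - ε) * ((Nat.card {i // P i} : ℝ) + 1) ≤
          (Nat.card {i // P i ∧ (q i : EReal) ≤ t} : ℝ) +
            (if (⊤ : EReal) ≤ t then 1 else 0)} < (x : EReal) ↔
      (1 - ε) * ((Nat.card {i // P i} : ℝ) + 1) ≤ (Nat.card {i // P i ∧ q i < x} : ℝ) := by
  rw [sInf_lt_iff]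
  constructor
  · rintro ⟨t, ht, htx⟩
    have htop : ¬ ((⊤ : EReal) ≤ t) := by
      intro h; exact absurd (lt_of_le_of_lt h htx) (by simp)
    simp only [Set.mem_setOf_eq, htop, if_false, add_zero] at ht
    refine ht.trans ?_
    have := natcard_mono (α := Fin n) (P := fun i => P i ∧ (q i : EReal) ≤ t)
      (Q := fun i => P i ∧ q i < x) (fun i hi => ⟨hi.1, by
        have : (q i : EReal) < (x : EReal) := lt_of_le_of_lt hi.2 htx
        exact_mod_cast this⟩)
    exact_mod_cast this
  · intro h
    set c := (1 - ε) * ((Nat.card {i // P i} : ℝ) + 1) with hc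
    have hcpos : 0 < c := by
      apply mul_pos (by linarith)
      positivity
    have hpos : 0 < (Nat.card {i // P i ∧ q i < x} : ℝ) := lt_of_lt_of_le hcpos h
    set F := Finset.univ.filter (fun i => P i ∧ q i < x) with hF
    have hFne : F.Nonempty := by
      rw [← Finset.card_pos]
      have h3 : F.card = Nat.card {i // P i ∧ q i < x} := by
        rw [hF]; exact (natcard_eq_filter (fun i => P i ∧ q i < x)).symm
      rw [h3]
      exact_mod_cast hpos
    obtain ⟨i0, hi0F, hmax⟩ := F.exists_max_image q hFne
    have hi0 : P i0 ∧ q i0 < x := by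
      simpa [hF] using hi0F
    refine ⟨(q i0 : EReal), ?_, by exact_mod_cast hi0.2⟩
    have htop : ¬ ((⊤ : EReal) ≤ (q i0 : EReal)) := by simp
    simp only [Set.mem_setOf_eq, htop, if_false, add_zero]
    refine h.trans ?_
    have := natcard_mono (α := Fin n) (P := fun i => P i ∧ q i < x)
      (Q := fun i => P i ∧ (q i : EReal) ≤ (q i0 : EReal)) (fun i hi => ⟨hi.1, by
        have : q i ≤ q i0 := hmax i (by simp [hF, hi.1, hi.2])
        exact_mod_cast this⟩)
    exact_mod_cast this

/-- Rank counting lemma. -/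
lemma count_bad {α : Type*} [Fintype α] (q : α → ℝ) (Z : Finset α) {ε : ℝ} (hε : 0 ≤ ε) :
    ((Z.filter (fun j => (1 - ε) * (Z.card : ℝ) ≤
      ((Z.filter (fun i => q i < q j)).card : ℝ))).card : ℝ) ≤ ε * Z.card := by
  set B := Z.filter (fun j => (1 - ε) * (Z.card : ℝ) ≤
      ((Z.filter (fun i => q i < q j)).card : ℝ)) with hB
  rcases B.eq_empty_or_nonempty with h | h
  · simp [h]; positivity
  obtain ⟨j0, hj0B, hmin⟩ := B.exists_min_image q h
  have hj0 := (Finset.mem_filter.1 hj0B).2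
  have hBsub : B ⊆ Z.filter (fun i => ¬ q i < q j0) := by
    intro i hi
    refine Finset.mem_filter.2 ⟨(Finset.mem_filter.1 hi).1, not_lt.2 (hmin i hi)⟩
  have hsplit : (Z.filter (fun i => q i < q j0)).card
      + (Z.filter (fun i => ¬ q i < q j0)).card = Z.card :=
    Finset.card_filter_add_card_filter_not _
  have hle : (B.card : ℝ) ≤ (Z.filter (fun i => ¬ q i < q j0)).card :=
    by exact_mod_cast Finset.card_le_card hBsub
  have : ((Z.filter (fun i => q i < q j0)).card : ℝ)
      + ((Z.filter (fun i => ¬ q i < q j0)).card : ℝ) = Z.card := by exact_mod_cast hsplit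
  linarith


namespace ConformalAux

variable {𝒳 : Type*} [MeasurableSpace 𝒳] {K N : ℕ}

/-- label-is-zero predicate -/
def lab (k : Fin K) (f : Fin (N + 1) → 𝒳 × (Fin K → Bool)) (j : Fin (N + 1)) : Prop :=
  (f j).2 k = false

/-- score -/
def sc (p : Fin K → 𝒳 → ℝ) (k : Fin K) (f : Fin (N + 1) → 𝒳 × (Fin K → Bool))
    (j : Fin (N + 1)) : ℝ := p k (f j).1

/-- the bad event: test point j is a false positive -/
def Bad (p : Fin K → 𝒳 → ℝ) (k : Fin K) (ε : ℝ) (j : Fin (N + 1)) :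
    Set (Fin (N + 1) → 𝒳 × (Fin K → Bool)) :=
  {f | lab k f j ∧ (1 - ε) * ((univ.filter (lab k f)).card : ℝ) ≤
      ((univ.filter (fun i => lab k f i ∧ sc p k f i < sc p k f j)).card : ℝ)}

lemma measurable_lab (k : Fin K) (j : Fin (N + 1)) :
    MeasurableSet {f : Fin (N + 1) → 𝒳 × (Fin K → Bool) | lab k f j} := by
  have h : Measurable fun f : Fin (N + 1) → 𝒳 × (Fin K → Bool) => (f j).2 k :=
    (measurable_pi_apply k).comp (measurable_snd.comp (measurable_pi_apply j))
  exact h (measurableSet_singleton false)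

lemma measurable_sc (p : Fin K → 𝒳 → ℝ) (hp : ∀ k, Measurable (p k)) (k : Fin K)
    (j : Fin (N + 1)) :
    Measurable fun f : Fin (N + 1) → 𝒳 × (Fin K → Bool) => sc p k f j :=
  (hp k).comp (measurable_fst.comp (measurable_pi_apply j))

lemma measurable_card_filter
    {P : (Fin (N + 1) → 𝒳 × (Fin K → Bool)) → Fin (N + 1) → Prop}
    [∀ f i, Decidable (P f i)]
    (hG : ∀ i, MeasurableSet {f | P f i}) :
    Measurable fun f : Fin (N + 1) → 𝒳 × (Fin K → Bool) =>
      ((univ.filter (fun i => P f i)).card : ℝ) := by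
  have h : (fun f : Fin (N + 1) → 𝒳 × (Fin K → Bool) =>
      ((univ.filter (fun i => P f i)).card : ℝ)) =
      fun f => ∑ i : Fin (N + 1), if P f i then (1 : ℝ) else 0 := by
    funext f
    rw [Finset.card_filter]
    push_cast
    rfl
  rw [h]
  exact Finset.measurable_sum _ fun i _ =>
    Measurable.ite (hG i) measurable_const measurable_const

lemma measurable_bad (p : Fin K → 𝒳 → ℝ) (hp : ∀ k, Measurable (p k)) (k : Fin K)
    (ε : ℝ) (j : Fin (N + 1)) : MeasurableSet (Bad (𝒳 := 𝒳) p k ε j) := by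
  have h1 : Measurable fun f : Fin (N + 1) → 𝒳 × (Fin K → Bool) =>
      ((univ.filter (lab k f)).card : ℝ) :=
    measurable_card_filter (P := fun f i => lab k f i) (fun i => measurable_lab k i)
  have h2 : Measurable fun f : Fin (N + 1) → 𝒳 × (Fin K → Bool) =>
      ((univ.filter (fun i => lab k f i ∧ sc p k f i < sc p k f j)).card : ℝ) :=
    measurable_card_filter
      (P := fun f i => lab k f i ∧ sc p k f i < sc p k f j)
      (fun i => (measurable_lab k i).inter
        (measurableSet_lt (measurable_sc p hp k i) (measurable_sc p hp k j)))
  exact (measurable_lab k j).inter (measurableSet_le (h1.const_mul _) h2)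

lemma card_filter_comp_equiv {α : Type*} [Fintype α] (σ : α ≃ α) (P : α → Prop)
    [DecidablePred P] [DecidablePred fun i => P (σ i)] :
    (univ.filter (fun i => P (σ i))).card = (univ.filter P).card := by
  rw [Finset.card_filter, Finset.card_filter]
  exact Fintype.sum_equiv σ _ _ (fun i => by by_cases h : P (σ i) <;> simp [h])

lemma bad_comp_swap (p : Fin K → 𝒳 → ℝ) (k : Fin K) (ε : ℝ) (j : Fin (N + 1))
    (f : Fin (N + 1) → 𝒳 × (Fin K → Bool)) :
    (fun i => f (Equiv.swap j (Fin.last N) i)) ∈ Bad (𝒳 := 𝒳) p k ε (Fin.last N) ↔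
      f ∈ Bad (𝒳 := 𝒳) p k ε j := by
  set σ := Equiv.swap j (Fin.last N) with hσdef
  have hσ : σ (Fin.last N) = j := Equiv.swap_apply_right _ _
  show (lab k f (σ (Fin.last N)) ∧
      (1 - ε) * ((univ.filter (fun i => lab k f (σ i))).card : ℝ) ≤
        ((univ.filter (fun i =>
            lab k f (σ i) ∧ sc p k f (σ i) < sc p k f (σ (Fin.last N)))).card : ℝ)) ↔ _
  rw [hσ]
  rw [card_filter_comp_equiv σ (lab k f),
    card_filter_comp_equiv σ (fun i => lab k f i ∧ sc p k f i < sc p k f j)]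
  rfl

lemma pi_eval_measure (ν : Measure (𝒳 × (Fin K → Bool))) [IsProbabilityMeasure ν]
    (j : Fin (N + 1)) {L : Set (𝒳 × (Fin K → Bool))} (hL : MeasurableSet L) :
    Measure.pi (fun _ : Fin (N + 1) => ν) ((fun f => f j) ⁻¹' L) = ν L := by
  have h : (fun f : Fin (N + 1) → 𝒳 × (Fin K → Bool) => f j) ⁻¹' L =
      Set.pi Set.univ (Function.update (fun _ => Set.univ) j L) := by
    ext f
    simp only [Set.mem_preimage, Set.mem_pi, Set.mem_univ, true_implies]
    constructor
    · intro hf i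
      rcases eq_or_ne i j with rfl | hij
      · simpa using hf
      · simp [Function.update_of_ne hij]
    · intro hf
      have := hf j
      simpa using this
  rw [h, Measure.pi_pi]
  rw [Finset.prod_eq_single j (fun i _ hij => by simp [Function.update_of_ne hij]) (by simp)]
  simp

lemma natcard_castSucc {N : ℕ} (Q : Fin (N + 1) → Prop) :
    Nat.card {j : Fin (N + 1) // j ≠ Fin.last N ∧ Q j} = Nat.card {i : Fin N // Q i.castSucc} :=
  Nat.card_congr
  { toFun := fun j => ⟨j.1.castPred j.2.1, by rw [Fin.castSucc_castPred]; exact j.2.2⟩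
    invFun := fun i => ⟨i.1.castSucc, ⟨(Fin.castSucc_lt_last i.1).ne, i.2⟩⟩
    left_inv := fun j => by ext; simp
    right_inv := fun i => by ext; simp }

lemma card_filter_of_last {N : ℕ} (Q : Fin (N + 1) → Prop) [DecidablePred Q]
    (hQ : Q (Fin.last N)) :
    (univ.filter Q).card =
      (univ.filter (fun j => j ≠ Fin.last N ∧ Q j)).card + 1 := by
  have h : univ.filter Q =
      insert (Fin.last N) (univ.filter (fun j => j ≠ Fin.last N ∧ Q j)) := by
    ext j
    rcases eq_or_ne j (Fin.last N) with rfl | hj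
    · simp [hQ]
    · simp [hj]
  rw [h, Finset.card_insert_of_notMem (by simp)]

lemma card_filter_of_not_last {N : ℕ} (Q : Fin (N + 1) → Prop) [DecidablePred Q]
    (hQ : ¬ Q (Fin.last N)) :
    (univ.filter Q).card = (univ.filter (fun j => j ≠ Fin.last N ∧ Q j)).card := by
  congr 1
  apply Finset.filter_congr
  intro j _
  rcases eq_or_ne j (Fin.last N) with rfl | hj
  · simp [hQ]
  · simp [hj]

lemma sum_indicator_card {α ι : Type*} [Fintype ι] (S : ι → Set α) (f : α) :
    ∑ j : ι, (S j).indicator (fun _ => (1 : ℝ≥0∞)) f =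
      ((univ.filter (fun j => f ∈ S j)).card : ℝ≥0∞) := by
  rw [Finset.card_filter]
  push_cast
  simp [Set.indicator_apply]

end ConformalAux


open ConformalAux in
/-- Split conformal per-class false positive control: for i.i.d. pairs
`(X i, Y i)`, with `t_k` the `(1-ε)`-empirical quantile (in `EReal`, with an
extra `+∞` element) of the scores `p k (X i)` over calibration points with
`Y i k = 0`, the prediction rule `k ∈ Ŝ ↔ p k (X last) > t_k` satisfies
`P(k ∈ Ŝ ∧ Y last k = 0) ≤ ε · P(Y last k = 0)`. -/
theorem stmt_2 {Ω : Type*} [MeasurableSpace Ω] (μ : Measure Ω) [IsProbabilityMeasure μ]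
    {𝒳 : Type*} [MeasurableSpace 𝒳] (N K : ℕ)
    (X : Fin (N + 1) → Ω → 𝒳) (Y : Fin (N + 1) → Ω → Fin K → Bool)
    (hmeas : ∀ i, Measurable fun ω => (X i ω, Y i ω))
    (ν : Measure (𝒳 × (Fin K → Bool))) [IsProbabilityMeasure ν]
    (hiid : Measure.map (fun ω (i : Fin (N + 1)) => (X i ω, Y i ω)) μ =
      Measure.pi fun _ => ν)
    (p : Fin K → 𝒳 → ℝ) (hp : ∀ k, Measurable (p k))
    (k : Fin K) (ε : ℝ) (hε : ε ∈ Set.Ioo (0 : ℝ) 1) :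
    μ {ω |
        sInf {t : EReal |
          (1 - ε) * ((Nat.card {i : Fin N // Y i.castSucc ω k = false} : ℝ) + 1) ≤
            (Nat.card {i : Fin N //
              Y i.castSucc ω k = false ∧ (p k (X i.castSucc ω) : EReal) ≤ t} : ℝ) +
              (if (⊤ : EReal) ≤ t then 1 else 0)}
          < (p k (X (Fin.last N) ω) : EReal)
        ∧ Y (Fin.last N) ω k = false}
      ≤ ENNReal.ofReal ε * μ {ω | Y (Fin.last N) ω k = false} := by
  obtain ⟨hε0, hε1⟩ := hε
  set Φ : Ω → (Fin (N + 1) → 𝒳 × (Fin K → Bool)) := fun ω i => (X i ω, Y i ω) with hΦdef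
  set m : Measure (Fin (N + 1) → 𝒳 × (Fin K → Bool)) := Measure.pi fun _ => ν with hm
  have hΦ : Measurable Φ := measurable_pi_lambda _ hmeas
  have hBadMeas : ∀ j, MeasurableSet (Bad (𝒳 := 𝒳) (N := N) p k ε j) := measurable_bad p hp k ε
  have hlabMeas : ∀ j, MeasurableSet {f : Fin (N + 1) → 𝒳 × (Fin K → Bool) | lab k f j} :=
    measurable_lab k
  -- Event identification
  have hE : {ω |
        sInf {t : EReal |
          (1 - ε) * ((Nat.card {i : Fin N // Y i.castSucc ω k = false} : ℝ) + 1) ≤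
            (Nat.card {i : Fin N //
              Y i.castSucc ω k = false ∧ (p k (X i.castSucc ω) : EReal) ≤ t} : ℝ) +
              (if (⊤ : EReal) ≤ t then 1 else 0)}
          < (p k (X (Fin.last N) ω) : EReal)
        ∧ Y (Fin.last N) ω k = false} = Φ ⁻¹' Bad (𝒳 := 𝒳) (N := N) p k ε (Fin.last N) := by
    ext ω
    have hq := quantile_lt_iff (fun i : Fin N => Y i.castSucc ω k = false)
      (fun i => p k (X i.castSucc ω)) hε0 hε1 (p k (X (Fin.last N) ω))
    simp only [Set.mem_setOf_eq, Set.mem_preimage]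
    constructor
    · rintro ⟨h1, h2⟩
      have h1' := hq.mp h1
      refine ⟨h2, ?_⟩
      have haN : (univ.filter (lab k (Φ ω))).card =
          Nat.card {i : Fin N // Y i.castSucc ω k = false} + 1 := by
        rw [card_filter_of_last (lab k (Φ ω)) h2, ← natcard_eq_filter, natcard_castSucc]; rfl
      have hbN : (univ.filter (fun i => lab k (Φ ω) i ∧
            sc p k (Φ ω) i < sc p k (Φ ω) (Fin.last N))).card =
          Nat.card {i : Fin N // Y i.castSucc ω k = false ∧
            p k (X i.castSucc ω) < p k (X (Fin.last N) ω)} := by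
        rw [card_filter_of_not_last _ (fun h => lt_irrefl _ h.2), ← natcard_eq_filter,
          natcard_castSucc]; rfl
      rw [haN, hbN]
      push_cast
      exact h1'
    · rintro ⟨h2, h1⟩
      have haN : (univ.filter (lab k (Φ ω))).card =
          Nat.card {i : Fin N // Y i.castSucc ω k = false} + 1 := by
        rw [card_filter_of_last (lab k (Φ ω)) h2, ← natcard_eq_filter, natcard_castSucc]; rfl
      have hbN : (univ.filter (fun i => lab k (Φ ω) i ∧
            sc p k (Φ ω) i < sc p k (Φ ω) (Fin.last N))).card =
          Nat.card {i : Fin N // Y i.castSucc ω k = false ∧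
            p k (X i.castSucc ω) < p k (X (Fin.last N) ω)} := by
        rw [card_filter_of_not_last _ (fun h => lt_irrefl _ h.2), ← natcard_eq_filter,
          natcard_castSucc]; rfl
      rw [haN, hbN] at h1
      push_cast at h1
      exact ⟨hq.mpr h1, h2⟩
  -- swap invariance
  have hswap : ∀ j, m (Bad (𝒳 := 𝒳) (N := N) p k ε j) =
      m (Bad (𝒳 := 𝒳) (N := N) p k ε (Fin.last N)) := by
    intro j
    set σ := Equiv.swap j (Fin.last N) with hσdef
    have hmp : MeasurePreserving
        (fun f : Fin (N + 1) → 𝒳 × (Fin K → Bool) => fun i => f (σ i)) m m := by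
      have h0 := measurePreserving_piCongrLeft (fun _ : Fin (N + 1) => ν) σ.symm
      have heq : ⇑(MeasurableEquiv.piCongrLeft
          (fun _ : Fin (N + 1) => 𝒳 × (Fin K → Bool)) σ.symm) =
          fun f => fun i => f (σ i) := by
        funext f
        funext i
        rw [MeasurableEquiv.coe_piCongrLeft]
        have h2 := Equiv.piCongrLeft_apply_apply
          (fun _ : Fin (N + 1) => 𝒳 × (Fin K → Bool)) σ.symm f (σ i)
        simpa using h2
      rw [heq] at h0
      exact h0
    have hpre : Bad (𝒳 := 𝒳) (N := N) p k ε j =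
        (fun f : Fin (N + 1) → 𝒳 × (Fin K → Bool) => fun i => f (σ i)) ⁻¹'
          Bad (𝒳 := 𝒳) (N := N) p k ε (Fin.last N) :=
      Set.ext fun f => (bad_comp_swap p k ε j f).symm
    rw [hpre]
    exact hmp.measure_preimage (hBadMeas _).nullMeasurableSet
  -- counting bound
  have hcount : ∀ f : Fin (N + 1) → 𝒳 × (Fin K → Bool),
      ((univ.filter (fun j => f ∈ Bad (𝒳 := 𝒳) (N := N) p k ε j)).card : ℝ) ≤
        ε * ((univ.filter (fun j => lab k f j)).card : ℝ) := by
    intro f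
    have h := count_bad (sc p k f) (univ.filter (fun j => lab k f j)) hε0.le
    refine le_trans (le_of_eq ?_) h
    congr 1
    rw [Finset.filter_filter]
    refine congrArg Finset.card ?_
    apply Finset.filter_congr
    intro j _
    show f ∈ Bad (𝒳 := 𝒳) (N := N) p k ε j ↔ _
    unfold Bad
    simp only [Set.mem_setOf_eq]
    refine and_congr_right fun _ => ?_
    have hBB : ((univ.filter (fun j2 => lab k f j2)).filter
        (fun i => sc p k f i < sc p k f j)) =
        univ.filter (fun i => lab k f i ∧ sc p k f i < sc p k f j) :=
      Finset.filter_filter _ _ _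
    rw [hBB]
  -- the label set
  set L : Set (𝒳 × (Fin K → Bool)) := {d | d.2 k = false} with hLdef
  have hLmeas : MeasurableSet L := by
    have h : Measurable fun d : 𝒳 × (Fin K → Bool) => d.2 k :=
      (measurable_pi_apply k).comp measurable_snd
    exact h (measurableSet_singleton false)
  have hlab_meas_val : ∀ j, m {f : Fin (N + 1) → 𝒳 × (Fin K → Bool) | lab k f j} = ν L := by
    intro j
    have h1 : {f : Fin (N + 1) → 𝒳 × (Fin K → Bool) | lab k f j} =
        (fun f : Fin (N + 1) → 𝒳 × (Fin K → Bool) => f j) ⁻¹' L := rfl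
    rw [h1, hm]
    exact pi_eval_measure ν j hLmeas
  -- pointwise bound in ℝ≥0∞
  have hptw : ∀ f : Fin (N + 1) → 𝒳 × (Fin K → Bool),
      ∑ j, (Bad (𝒳 := 𝒳) (N := N) p k ε j).indicator (fun _ => (1 : ℝ≥0∞)) f ≤
        ENNReal.ofReal ε *
          ∑ j, ({f' : Fin (N + 1) → 𝒳 × (Fin K → Bool) | lab k f' j}).indicator
            (fun _ => (1 : ℝ≥0∞)) f := by
    intro f
    rw [sum_indicator_card, sum_indicator_card]
    have hc := hcount f
    calc ((univ.filter (fun j => f ∈ Bad (𝒳 := 𝒳) (N := N) p k ε j)).card : ℝ≥0∞)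
        = ENNReal.ofReal ((univ.filter
            (fun j => f ∈ Bad (𝒳 := 𝒳) (N := N) p k ε j)).card : ℝ) := by
          rw [ENNReal.ofReal_natCast]
      _ ≤ ENNReal.ofReal (ε * ((univ.filter (fun j => lab k f j)).card : ℝ)) :=
          ENNReal.ofReal_le_ofReal hc
      _ = ENNReal.ofReal ε *
            ENNReal.ofReal (((univ.filter (fun j => lab k f j)).card : ℝ)) :=
          ENNReal.ofReal_mul hε0.le
      _ = ENNReal.ofReal ε *
            ((univ.filter (fun j => f ∈ {f' : Fin (N + 1) → 𝒳 × (Fin K → Bool) |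
              lab k f' j})).card : ℝ≥0∞) := by
          rw [ENNReal.ofReal_natCast]
          rfl
  -- main chain
  have hfinal : ((N : ℝ≥0∞) + 1) * m (Bad (𝒳 := 𝒳) (N := N) p k ε (Fin.last N)) ≤
      ENNReal.ofReal ε * (((N : ℝ≥0∞) + 1) * ν L) := by
    calc ((N : ℝ≥0∞) + 1) * m (Bad (𝒳 := 𝒳) (N := N) p k ε (Fin.last N))
        = ∑ j : Fin (N + 1), m (Bad (𝒳 := 𝒳) (N := N) p k ε j) := by
          rw [Finset.sum_congr rfl (fun j _ => hswap j), Finset.sum_const,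
            Finset.card_univ, Fintype.card_fin, nsmul_eq_mul]
          push_cast
          ring
      _ = ∑ j : Fin (N + 1), ∫⁻ f,
            (Bad (𝒳 := 𝒳) (N := N) p k ε j).indicator (fun _ => (1 : ℝ≥0∞)) f ∂m := by
          refine Finset.sum_congr rfl fun j _ => ?_
          rw [lintegral_indicator_const (hBadMeas j), one_mul]
      _ = ∫⁻ f, ∑ j : Fin (N + 1),
            (Bad (𝒳 := 𝒳) (N := N) p k ε j).indicator (fun _ => (1 : ℝ≥0∞)) f ∂m :=
          (lintegral_finset_sum _ fun j _ =>
            measurable_const.indicator (hBadMeas j)).symm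
      _ ≤ ∫⁻ f, ENNReal.ofReal ε * ∑ j : Fin (N + 1),
            ({f' : Fin (N + 1) → 𝒳 × (Fin K → Bool) | lab k f' j}).indicator
              (fun _ => (1 : ℝ≥0∞)) f ∂m := lintegral_mono hptw
      _ = ENNReal.ofReal ε * ∫⁻ f, ∑ j : Fin (N + 1),
            ({f' : Fin (N + 1) → 𝒳 × (Fin K → Bool) | lab k f' j}).indicator
              (fun _ => (1 : ℝ≥0∞)) f ∂m :=
          lintegral_const_mul _ (Finset.measurable_sum _ fun j _ =>
            measurable_const.indicator (hlabMeas j))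
      _ = ENNReal.ofReal ε * ∑ j : Fin (N + 1),
            m {f' : Fin (N + 1) → 𝒳 × (Fin K → Bool) | lab k f' j} := by
          rw [lintegral_finset_sum _ fun j _ =>
            measurable_const.indicator (hlabMeas j)]
          congr 1
          refine Finset.sum_congr rfl fun j _ => ?_
          rw [lintegral_indicator_const (hlabMeas j), one_mul]
      _ = ENNReal.ofReal ε * (((N : ℝ≥0∞) + 1) * ν L) := by
          rw [Finset.sum_congr rfl (fun j _ => hlab_meas_val j), Finset.sum_const,
            Finset.card_univ, Fintype.card_fin, nsmul_eq_mul]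
          push_cast
          ring
  have hNne : ((N : ℝ≥0∞) + 1) ≠ 0 := by simp
  have hNnetop : ((N : ℝ≥0∞) + 1) ≠ ⊤ := by simp
  have hkey : m (Bad (𝒳 := 𝒳) (N := N) p k ε (Fin.last N)) ≤ ENNReal.ofReal ε * ν L := by
    rw [← ENNReal.mul_le_mul_iff_right hNne hNnetop]
    calc ((N : ℝ≥0∞) + 1) * m (Bad (𝒳 := 𝒳) (N := N) p k ε (Fin.last N))
        ≤ ENNReal.ofReal ε * (((N : ℝ≥0∞) + 1) * ν L) := hfinal
      _ = ((N : ℝ≥0∞) + 1) * (ENNReal.ofReal ε * ν L) := by ring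
  have hYlast : μ {ω | Y (Fin.last N) ω k = false} = ν L := by
    have h1 : {ω | Y (Fin.last N) ω k = false} =
        Φ ⁻¹' {f : Fin (N + 1) → 𝒳 × (Fin K → Bool) | lab k f (Fin.last N)} := rfl
    rw [h1, ← Measure.map_apply hΦ (hlabMeas _), hiid, hlab_meas_val]
  rw [hE, ← Measure.map_apply hΦ (hBadMeas _), hiid, hYlast]
  exact hkey
end

section
/- Let T_1,...,T_{N+1} be exchangeable random variables taking values in ℝ ∪ {+∞}, and let δ ∈ (0,1). Define T_{c,δ} = -Q(1-δ; {-T_1,...,-T_N} ∪ {+∞}) where Q(β; ·) is the β-empirical quantile (infimum t with CDF at least β). Then P(T_{N+1} ≥ T_{c,δ}) ≥ 1 - δ. -/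
open MeasureTheory
open scoped ENNReal Classical

/-- Number of coordinates of `u` strictly larger than coordinate `j`. -/
noncomputable def pcount {M : ℕ} (j : Fin M) (u : Fin M → EReal) : ℕ :=
  (Finset.univ.filter fun i => u j < u i).card

lemma measurable_pcount {M : ℕ} (j : Fin M) : Measurable (pcount j) := by
  have h : (fun u : Fin M → EReal => pcount j u) =
      fun u => ∑ i : Fin M, if u j < u i then (1 : ℕ) else 0 := by
    funext u; rw [pcount, Finset.card_filter]
  rw [show pcount j = fun u => ∑ i : Fin M, if u j < u i then (1 : ℕ) else 0 from h]
  exact Finset.measurable_sum _ fun i _ =>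
    Measurable.ite (measurableSet_lt (measurable_pi_apply j) (measurable_pi_apply i))
      measurable_const measurable_const

lemma pcount_perm {M : ℕ} (u : Fin M → EReal) (π : Equiv.Perm (Fin M)) (j : Fin M) :
    pcount j (fun i => u (π i)) = pcount (π j) u := by
  unfold pcount
  rw [Finset.card_filter, Finset.card_filter]
  exact Fintype.sum_equiv π _ _ fun i => rfl

lemma quantile_key {N : ℕ} (v : Fin N → EReal) (s : EReal) (c : ℝ) (hc : 0 < c) :
    s ≤ sInf {t : EReal |
        c ≤ ((Finset.univ.filter fun i => v i ≤ t).card : ℝ) +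
          (if (⊤ : EReal) ≤ t then 1 else 0)} ↔
    ((Finset.univ.filter fun i => v i < s).card : ℝ) < c := by
  constructor
  · intro h
    by_contra hcontra
    push_neg at hcontra
    have hne : (Finset.univ.filter fun i => v i < s).Nonempty := by
      rw [← Finset.card_pos]
      exact_mod_cast lt_of_lt_of_le hc hcontra
    obtain ⟨i0, hi0, hmax⟩ :=
      Finset.exists_max_image (Finset.univ.filter fun i => v i < s) v hne
    have hi0s : v i0 < s := (Finset.mem_filter.mp hi0).2
    have htop : ¬ ((⊤ : EReal) ≤ v i0) := fun ht =>
      absurd (lt_of_le_of_lt ht hi0s) (by simp)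
    have hmem : v i0 ∈ {t : EReal |
        c ≤ ((Finset.univ.filter fun i => v i ≤ t).card : ℝ) +
          (if (⊤ : EReal) ≤ t then 1 else 0)} := by
      simp only [Set.mem_setOf_eq, if_neg htop, add_zero]
      refine le_trans hcontra ?_
      have hsub : (Finset.univ.filter fun i => v i < s) ⊆
          (Finset.univ.filter fun i => v i ≤ v i0) := by
        intro i hi
        simp only [Finset.mem_filter, Finset.mem_univ, true_and]
        exact hmax i hi
      exact_mod_cast Finset.card_le_card hsub
    have := le_trans h (sInf_le hmem)
    exact absurd (lt_of_le_of_lt this hi0s) (lt_irrefl _)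
  · intro hcount
    apply le_sInf
    intro t ht
    simp only [Set.mem_setOf_eq] at ht
    by_contra hts
    push_neg at hts
    have hsub : (Finset.univ.filter fun i => v i ≤ t) ⊆
        (Finset.univ.filter fun i => v i < s) := by
      intro i hi
      simp only [Finset.mem_filter, Finset.mem_univ, true_and] at hi ⊢
      exact lt_of_le_of_lt hi hts
    have h2 : ¬ ((⊤ : EReal) ≤ t) := fun h => absurd (lt_of_le_of_lt h hts) (by simp)
    rw [if_neg h2] at ht
    have h3 : ((Finset.univ.filter fun i => v i ≤ t).card : ℝ) ≤
        ((Finset.univ.filter fun i => v i < s).card : ℝ) := by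
      exact_mod_cast Finset.card_le_card hsub
    linarith

lemma event_eq {N : ℕ} (w : Fin (N + 1) → EReal) (c : ℝ) (hc : 0 < c) :
    (-(sInf {t : EReal |
        c ≤ (Nat.card {i : Fin N // -(w i.castSucc) ≤ t} : ℝ) +
          (if (⊤ : EReal) ≤ t then 1 else 0)}) ≤ w (Fin.last N))
    ↔ ((pcount (Fin.last N) w : ℝ) < c) := by
  rw [EReal.neg_le]
  have hA : {t : EReal |
        c ≤ (Nat.card {i : Fin N // -(w i.castSucc) ≤ t} : ℝ) +
          (if (⊤ : EReal) ≤ t then 1 else 0)} =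
      {t : EReal |
        c ≤ (((Finset.univ.filter fun i : Fin N => -(w i.castSucc) ≤ t)).card : ℝ) +
          (if (⊤ : EReal) ≤ t then 1 else 0)} := by
    ext t
    simp only [Set.mem_setOf_eq, Nat.card_eq_fintype_card, Fintype.card_subtype]
  rw [hA, quantile_key (fun i : Fin N => -(w i.castSucc)) (-(w (Fin.last N))) c hc]
  have hcard : ((Finset.univ.filter fun i : Fin N => -(w i.castSucc) < -(w (Fin.last N)))).card
      = pcount (Fin.last N) w := by
    unfold pcount
    rw [Finset.card_filter, Finset.card_filter, Fin.sum_univ_castSucc]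
    simp [EReal.neg_lt_neg_iff]
  rw [hcard]

lemma rank_count_bound {M : ℕ} (u : Fin M → EReal) (c : ℝ) (hcM : c ≤ M) :
    ((Finset.univ.filter fun j : Fin M => c ≤ ((pcount j u : ℕ) : ℝ)).card : ℝ) ≤ M - c := by
  unfold pcount
  set B := Finset.univ.filter fun j : Fin M =>
      c ≤ ((Finset.univ.filter fun i => u j < u i).card : ℝ) with hB
  rcases B.eq_empty_or_nonempty with h | h
  · rw [h]; simp; linarith
  · obtain ⟨j0, hj0, hmax⟩ := Finset.exists_max_image B u h
    set G := Finset.univ.filter fun i => u j0 < u i with hG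
    have hcG : c ≤ (G.card : ℝ) := (Finset.mem_filter.mp hj0).2
    have hdisj : Disjoint B G := by
      rw [Finset.disjoint_right]
      intro i hiG hiB
      have h1 : u j0 < u i := (Finset.mem_filter.mp hiG).2
      exact absurd (lt_of_lt_of_le h1 (hmax i hiB)) (lt_irrefl _)
    have hcard : B.card + G.card ≤ M := by
      calc B.card + G.card = (B ∪ G).card := (Finset.card_union_of_disjoint hdisj).symm
        _ ≤ (Finset.univ : Finset (Fin M)).card := Finset.card_le_card (Finset.subset_univ _)
        _ = M := by simp
    have : (B.card : ℝ) + (G.card : ℝ) ≤ M := by exact_mod_cast hcard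
    linarith

/-- One-sided split conformal bound for exchangeable thresholds valued in
`ℝ ∪ {+∞}` (modeled as `EReal` values that are never `⊥`): with
`T_{c,δ} = -Q(1-δ; {-T 0, ..., -T (N-1)} ∪ {+∞})`, the new exchangeable value
satisfies `P(T N ≥ T_{c,δ}) ≥ 1-δ`. -/
theorem stmt_7 {Ω : Type*} [MeasurableSpace Ω] (μ : Measure Ω) [IsProbabilityMeasure μ]
    (N : ℕ) (T : Fin (N + 1) → Ω → EReal) (hmeas : ∀ i, Measurable (T i))
    (hbot : ∀ i ω, T i ω ≠ ⊥)
    (hexch : ∀ π : Equiv.Perm (Fin (N + 1)),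
      Measure.map (fun ω i => T (π i) ω) μ = Measure.map (fun ω i => T i ω) μ)
    (δ : ℝ) (hδ : δ ∈ Set.Ioo (0 : ℝ) 1) :
    ENNReal.ofReal (1 - δ) ≤
      μ {ω |
        -(sInf {t : EReal |
            (1 - δ) * (N + 1) ≤
              (Nat.card {i : Fin N // -(T i.castSucc ω) ≤ t} : ℝ) +
                (if (⊤ : EReal) ≤ t then 1 else 0)})
          ≤ T (Fin.last N) ω} := by
  obtain ⟨hδ0, hδ1⟩ := hδ
  set c : ℝ := (1 - δ) * (N + 1) with hc_def
  have hN1 : (0 : ℝ) < N + 1 := by positivity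
  have hc0 : 0 < c := mul_pos (by linarith) hN1
  have hcM : c ≤ (N : ℝ) + 1 := by nlinarith
  have hTvec : Measurable fun ω i => T i ω := measurable_pi_lambda _ hmeas
  set bad : Fin (N + 1) → Set Ω :=
    fun j => {ω | c ≤ (pcount j (fun i => T i ω) : ℝ)} with hbad
  have hbadmeas : ∀ j, MeasurableSet (bad j) := by
    intro j
    have h1 : Measurable fun ω => pcount j (fun i => T i ω) :=
      (measurable_pcount j).comp hTvec
    exact measurableSet_le measurable_const (measurable_from_top.comp h1)
  have hEvent : {ω |
      -(sInf {t : EReal |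
          c ≤ (Nat.card {i : Fin N // -(T i.castSucc ω) ≤ t} : ℝ) +
            (if (⊤ : EReal) ≤ t then 1 else 0)}) ≤ T (Fin.last N) ω}
      = (bad (Fin.last N))ᶜ := by
    ext ω
    simp only [Set.mem_setOf_eq, Set.mem_compl_iff, hbad, not_le]
    exact event_eq (fun i => T i ω) c hc0
  have hmapeq : ∀ j, μ (bad j) = μ (bad (Fin.last N)) := by
    intro j
    set π := Equiv.swap j (Fin.last N) with hπ
    have hTπ : Measurable fun ω i => T (π i) ω :=
      measurable_pi_lambda _ fun i => hmeas (π i)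
    set V : Set (Fin (N + 1) → EReal) := {u | c ≤ (pcount (Fin.last N) u : ℝ)} with hV
    have hVmeas : MeasurableSet V :=
      measurableSet_le measurable_const
        (measurable_from_top.comp (measurable_pcount (Fin.last N)))
    have h1 : (fun ω i => T (π i) ω) ⁻¹' V = bad j := by
      ext ω
      simp only [Set.mem_preimage, hV, Set.mem_setOf_eq, hbad]
      rw [pcount_perm (fun i => T i ω) π (Fin.last N), Equiv.swap_apply_right]
    have h2 : (fun ω i => T i ω) ⁻¹' V = bad (Fin.last N) := rfl
    calc μ (bad j) = (μ.map fun ω i => T (π i) ω) V := by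
          rw [Measure.map_apply hTπ hVmeas, h1]
      _ = (μ.map fun ω i => T i ω) V := by rw [hexch π]
      _ = μ (bad (Fin.last N)) := by rw [Measure.map_apply hTvec hVmeas, h2]
  have hptwise : ∀ ω, ∑ j : Fin (N + 1), (bad j).indicator (1 : Ω → ℝ≥0∞) ω ≤
      ENNReal.ofReal ((N : ℝ) + 1 - c) := by
    intro ω
    have h1 : ∀ j : Fin (N + 1), (bad j).indicator (1 : Ω → ℝ≥0∞) ω =
        if c ≤ (pcount j (fun i => T i ω) : ℝ) then 1 else 0 := by
      intro j
      by_cases h : c ≤ (pcount j (fun i => T i ω) : ℝ)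
      · have hmem : ω ∈ bad j := h
        rw [if_pos h, Set.indicator_of_mem hmem]
        rfl
      · have hmem : ω ∉ bad j := h
        rw [if_neg h, Set.indicator_of_notMem hmem]
    rw [Finset.sum_congr rfl fun j _ => h1 j, Finset.sum_boole]
    have h2 : ((Finset.univ.filter fun j : Fin (N + 1) =>
        c ≤ (pcount j (fun i => T i ω) : ℝ)).card : ℝ) ≤ (N : ℝ) + 1 - c := by
      have := rank_count_bound (fun i => T i ω) c (by push_cast; linarith)
      push_cast at this ⊢
      linarith
    calc ((Finset.univ.filter fun j : Fin (N + 1) =>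
          c ≤ (pcount j (fun i => T i ω) : ℝ)).card : ℝ≥0∞)
        = ENNReal.ofReal ((Finset.univ.filter fun j : Fin (N + 1) =>
          c ≤ (pcount j (fun i => T i ω) : ℝ)).card : ℝ) := by
          rw [ENNReal.ofReal_natCast]
      _ ≤ ENNReal.ofReal ((N : ℝ) + 1 - c) := ENNReal.ofReal_le_ofReal h2
  have hsum : ∑ j : Fin (N + 1), μ (bad j) ≤ ENNReal.ofReal ((N : ℝ) + 1 - c) := by
    calc ∑ j : Fin (N + 1), μ (bad j)
        = ∑ j : Fin (N + 1), ∫⁻ ω, (bad j).indicator 1 ω ∂μ :=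
          Finset.sum_congr rfl fun j _ => (lintegral_indicator_one (hbadmeas j)).symm
      _ = ∫⁻ ω, ∑ j : Fin (N + 1), (bad j).indicator 1 ω ∂μ :=
          (lintegral_finset_sum _ fun j _ => measurable_one.indicator (hbadmeas j)).symm
      _ ≤ ∫⁻ _, ENNReal.ofReal ((N : ℝ) + 1 - c) ∂μ := lintegral_mono hptwise
      _ = ENNReal.ofReal ((N : ℝ) + 1 - c) := by simp
  have hmain : ∑ j : Fin (N + 1), μ (bad j) = ((N + 1 : ℕ) : ℝ≥0∞) * μ (bad (Fin.last N)) := by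
    rw [Finset.sum_congr rfl fun j _ => hmapeq j, Finset.sum_const, Finset.card_univ,
      Fintype.card_fin, nsmul_eq_mul]
  have hbadle : μ (bad (Fin.last N)) ≤ ENNReal.ofReal δ := by
    have h1 : ((N + 1 : ℕ) : ℝ≥0∞) * μ (bad (Fin.last N)) ≤
        ((N + 1 : ℕ) : ℝ≥0∞) * ENNReal.ofReal δ := by
      rw [← hmain]
      refine le_trans hsum ?_
      have he : (N : ℝ) + 1 - c = δ * ((N : ℝ) + 1) := by rw [hc_def]; ring
      rw [he, ENNReal.ofReal_mul hδ0.le, mul_comm,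
        show ((N : ℝ) + 1) = ((N + 1 : ℕ) : ℝ) by push_cast; ring, ENNReal.ofReal_natCast]
    exact (ENNReal.mul_le_mul_iff_right (by exact_mod_cast Nat.succ_ne_zero N)
      (ENNReal.natCast_ne_top _)).mp h1
  rw [hEvent, prob_compl_eq_one_sub (hbadmeas (Fin.last N))]
  have hofr : ENNReal.ofReal (1 - δ) = 1 - ENNReal.ofReal δ := by
    rw [ENNReal.ofReal_sub 1 hδ0.le, ENNReal.ofReal_one]
  rw [hofr]
  exact tsub_le_tsub_left hbadle 1
end
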